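/- arXiv:2604.20818 — 3 statements merged into one kernel-verified Lean document; each statement's English description precedes it below -/
import Mathlib

section
/- Let f(z) = [[a₁, b₁ + b₂ z], [b₁ + b₂/z, a₁]] with b₁, b₂ ∈ ℂ nonzero. The polynomial det(f(z) - λ Id), viewed as a quadratic in λ, has a double root for some z on the unit circle if and only if b₂ = -b₁ e^{iα} for some α ∈ ℝ, i.e., if and only if |b₁| = |b₂|. -/
/-! A monic quadratic `(a - λ)² - c` in `λ` is a perfect square exactly when `c = 0`. For the
dimer symbol `c = (b₁ + b₂ z)(b₁ + b₂ / z)`, and on the unit circle a factor vanishes only if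
`|b₁| = |b₂|`; conversely, if `b₂ = -b₁ e^{iα}`, the point `z = e^{-iα}` kills the first factor. -/

open Complex

theorem exists_forall_sub_sq_sub_eq_sq_iff {K : Type*} [Field K] [NeZero (2 : K)] (a c : K) :
    (∃ μ : K, ∀ lam : K, (a - lam) ^ 2 - c = (lam - μ) ^ 2) ↔ c = 0 := by
  constructor
  · rintro ⟨μ, hμ⟩
    have h2c : 2 * c = 0 := by linear_combination -hμ a - hμ μ
    simpa [two_ne_zero] using h2c
  · rintro rfl
    exact ⟨a, fun lam => by ring⟩

theorem exists_eq_neg_mul_exp_iff_norm_eq (b₁ b₂ : ℂ) :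
    (∃ α : ℝ, b₂ = -b₁ * exp (α * I)) ↔ ‖b₁‖ = ‖b₂‖ := by
  constructor
  · rintro ⟨α, rfl⟩
    simp [norm_exp_ofReal_mul_I]
  · intro hnorm
    rcases eq_or_ne b₁ 0 with rfl | hb₁
    · exact ⟨0, by simpa [eq_comm] using hnorm⟩
    · have hunit : ‖-b₂ / b₁‖ = 1 := by
        rw [norm_div, norm_neg, ← hnorm, div_self (norm_ne_zero_iff.mpr hb₁)]
      obtain ⟨α, hα⟩ := (norm_eq_one_iff _).mp hunit
      refine ⟨α, ?_⟩
      rw [hα]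
      field_simp

theorem norm_eq_of_mul_add_mul_div_eq_zero {b₁ b₂ z : ℂ} (hz : ‖z‖ = 1)
    (h : (b₁ + b₂ * z) * (b₁ + b₂ / z) = 0) : ‖b₁‖ = ‖b₂‖ := by
  rcases mul_eq_zero.mp h with h | h
  · simpa [hz] using congrArg norm (eq_neg_of_add_eq_zero_left h)
  · simpa [hz] using congrArg norm (eq_neg_of_add_eq_zero_left h)

theorem stmt6_general (a₁ b₁ b₂ : ℂ) :
    ((∃ z : ℂ, ‖z‖ = 1 ∧ ∃ μ : ℂ,
        ∀ lam : ℂ, (a₁ - lam) ^ 2 - (b₁ + b₂ * z) * (b₁ + b₂ / z) = (lam - μ) ^ 2)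
      ↔ ∃ α : ℝ, b₂ = -b₁ * Complex.exp (α * Complex.I)) ∧
    ((∃ α : ℝ, b₂ = -b₁ * Complex.exp (α * Complex.I)) ↔
      ‖b₁‖ = ‖b₂‖) := by
  have hrot := exists_eq_neg_mul_exp_iff_norm_eq b₁ b₂
  refine ⟨?_, hrot⟩
  simp only [exists_forall_sub_sq_sub_eq_sq_iff]
  constructor
  · rintro ⟨z, hz, hzero⟩
    exact hrot.mpr (norm_eq_of_mul_add_mul_div_eq_zero hz hzero)
  · rintro ⟨α, rfl⟩
    refine ⟨exp (-α * I), by exact_mod_cast norm_exp_ofReal_mul_I (-α), ?_⟩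
    have hcancel : exp (α * I) * exp (-α * I) = 1 := by rw [← exp_add]; simp
    rw [mul_assoc, hcancel, mul_one, add_neg_cancel, zero_mul]

/-- Band-gap closing for the dimer symbol: `det(f(z) - λ)` has a double root in `λ` for some
`z` on the unit circle iff `b₂ = -b₁ e^{iα}` for some real `α`, iff `|b₁| = |b₂|`. -/
theorem stmt6 (a₁ b₁ b₂ : ℂ) (hb₁ : b₁ ≠ 0) (hb₂ : b₂ ≠ 0) :
    ((∃ z : ℂ, ‖z‖ = 1 ∧ ∃ μ : ℂ,
        ∀ lam : ℂ, (a₁ - lam) ^ 2 - (b₁ + b₂ * z) * (b₁ + b₂ / z) = (lam - μ) ^ 2)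
      ↔ ∃ α : ℝ, b₂ = -b₁ * Complex.exp (α * Complex.I)) ∧
    ((∃ α : ℝ, b₂ = -b₁ * Complex.exp (α * Complex.I)) ↔
      ‖b₁‖ = ‖b₂‖) :=
  stmt6_general a₁ b₁ b₂
end

section
/- Let T_A be the semi-infinite operator on ℓ²(ℕ) and T_{AB} the two-sided interface operator on ℓ²(ℤ) defined by: T_{AB} restricted to positive indices acts as T_A, restricted to negative indices acts as the reflection R T_A R, with interface row (T_{AB}w)₀ = q w₋₁ + η w₀ + q w₁ and coupling rows (T_{AB}w)₁ = q w₀ + (T_A w₊)₁, (T_{AB}w)₋₁ = q w₀ + (R T_A R w₋)₋₁. If T_A v = λ v with v ∈ ℓ²(ℕ), then the vector w defined by wᵢ = vᵢ for i > 0, w₀ = 0, wᵢ = -v_{|i|} for i < 0, satisfies T_{AB} w = λ w. In particular σ_p(T_A) ⊆ σ_p(T_{AB}). -/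
/-!
Away from the interface, each row of `T_{AB}` applied to the dipole extension `w` is a row of
`T_A v = λ v`, on the negative side multiplied by `-1`. The interface row only sees `w₀ = 0` and
`w₋₁ = -w₁`, so the couplings `q` and `η` cancel out.
-/

open scoped ENNReal

def antisymmExt {α : Type*} [Zero α] [Neg α] (v : ℕ → α) : ℤ → α
  | Int.ofNat 0 => 0
  | Int.ofNat (n + 1) => v n
  | Int.negSucc n => -v n

section antisymmExt

variable {α : Type*} [Zero α] [Neg α] (v : ℕ → α)

@[simp]
lemma antisymmExt_zero : antisymmExt v 0 = 0 := rfl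

lemma antisymmExt_of_eq_add_one {i : ℤ} {n : ℕ} (h : i = n + 1) : antisymmExt v i = v n := by
  subst h; rfl

lemma antisymmExt_of_eq_neg_sub_one {i : ℤ} {n : ℕ} (h : i = -n - 1) :
    antisymmExt v i = -v n := by
  obtain rfl : i = Int.negSucc n := by omega
  rfl

lemma antisymmExt_apply (i : ℤ) : antisymmExt v i =
    if 0 < i then v (i - 1).toNat else if i = 0 then 0 else -v (-i - 1).toNat := by
  rcases Int.lt_trichotomy i 0 with hi | rfl | hi
  · rw [if_neg hi.not_gt, if_neg hi.ne,
      antisymmExt_of_eq_neg_sub_one v (n := (-i - 1).toNat) (by omega)]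
  · rfl
  · rw [if_pos hi, antisymmExt_of_eq_add_one v (n := (i - 1).toNat) (by omega)]

end antisymmExt

lemma memℓp_int_of_add_one_of_neg_add_one {E : Type*} [NormedAddCommGroup E] {p : ℝ≥0∞}
    (hp : 0 < p.toReal) {f : ℤ → E} (hpos : Memℓp (fun n : ℕ => f (n + 1)) p)
    (hneg : Memℓp (fun n : ℕ => f (-(n + 1))) p) : Memℓp f p := by
  refine memℓp_gen (.of_nat_of_neg_add_one ?_ (hneg.summable hp))
  exact (summable_nat_add_iff 1).1 (by exact_mod_cast hpos.summable hp)

lemma Memℓp.antisymmExt {E : Type*} [NormedAddCommGroup E] {p : ℝ≥0∞} (hp : 0 < p.toReal)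
    {v : ℕ → E} (hv : Memℓp v p) : Memℓp (antisymmExt v) p := by
  refine memℓp_int_of_add_one_of_neg_add_one hp ?_ ?_
  · simpa only [antisymmExt_of_eq_add_one v rfl] using hv
  · simp only [antisymmExt_of_eq_neg_sub_one v (neg_add' _ _)]
    exact hv.neg

/-- Edge-induced interface modes: if `T_A v = λ v` with `v ∈ ℓ²(ℕ)`, then the antisymmetric
(dipole) extension `w` (with `w₀ = 0`) is an eigenvector of the reflection-symmetric interface
operator `T_{AB}` with the same eigenvalue, independently of the couplings `q, η`. -/
theorem stmt14 (delta beta : ℕ → ℂ) (q eta lam : ℂ)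
    (v : ℕ → ℂ) (hv2 : Memℓp v 2)
    (hrow0 : delta 0 * v 0 + beta 0 * v 1 = lam * v 0)
    (hrows : ∀ n : ℕ,
      beta n * v n + delta (n + 1) * v (n + 1) + beta (n + 1) * v (n + 2) = lam * v (n + 1))
    (w : ℤ → ℂ)
    (hw : ∀ i : ℤ, w i =
      if 0 < i then v (i - 1).toNat else if i = 0 then 0 else -v (-i - 1).toNat) :
    Memℓp w 2 ∧
    (q * w (-1) + eta * w 0 + q * w 1 = lam * w 0) ∧
    (q * w 0 + delta 0 * w 1 + beta 0 * w 2 = lam * w 1) ∧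
    (∀ n : ℕ, beta n * w ((n : ℤ) + 1) + delta (n + 1) * w ((n : ℤ) + 2) +
      beta (n + 1) * w ((n : ℤ) + 3) = lam * w ((n : ℤ) + 2)) ∧
    (q * w 0 + delta 0 * w (-1) + beta 0 * w (-2) = lam * w (-1)) ∧
    (∀ n : ℕ, beta n * w (-(n : ℤ) - 1) + delta (n + 1) * w (-(n : ℤ) - 2) +
      beta (n + 1) * w (-(n : ℤ) - 3) = lam * w (-(n : ℤ) - 2)) := by
  obtain rfl : w = antisymmExt v := funext fun i => by rw [hw, antisymmExt_apply]
  have hpos := fun (i : ℤ) (n : ℕ) (h : i = n + 1) => antisymmExt_of_eq_add_one v h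
  have hneg := fun (i : ℤ) (n : ℕ) (h : i = -n - 1) => antisymmExt_of_eq_neg_sub_one v h
  refine ⟨hv2.antisymmExt (by norm_num), ?_, ?_, fun n => ?_, ?_, fun n => ?_⟩
  · rw [antisymmExt_zero, hpos 1 0 (by simp), hneg (-1) 0 (by simp)]
    ring
  · rw [antisymmExt_zero, hpos 1 0 (by simp), hpos 2 1 (by norm_num)]
    linear_combination hrow0
  · rw [hpos _ n rfl, hpos _ (n + 1) (by push_cast; ring), hpos _ (n + 2) (by push_cast; ring)]
    exact hrows n
  · rw [antisymmExt_zero, hneg (-1) 0 (by simp), hneg (-2) 1 (by norm_num)]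
    linear_combination -hrow0
  · rw [hneg _ n rfl, hneg _ (n + 1) (by push_cast; ring), hneg _ (n + 2) (by push_cast; ring)]
    linear_combination -hrows n
end

section
/- Let T_A be a bounded tridiagonal operator on ℓ²(ℕ) and define the interface operator T_{AB} on ℓ²(ℤ) by joining T_A and its mirror R T_A R through a single off-diagonal coupling q (no shared interface site): (T_{AB}w)ᵢ = (T_A w₊)ᵢ for i ≥ 2, (T_{AB}w)₁ = q w₀ + (T_A w₊)₁, and symmetrically for negative indices. Suppose u ∈ ℓ²(ℕ) satisfies the bulk equations (T_A u)ᵢ = λ uᵢ for i ≥ 2 and the first row satisfies ((T_A)₁₁ - λ)u₁ + (T_A)₁₂ u₂ = -aq u₁ for some a ∈ {+1, -1}. Then w defined by wᵢ = u_i for i ≥ 1 and wᵢ = a·u_{|i|} for i ≤ 0 (with appropriate index shift) satisfies T_{AB}w = λ w. -/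
/-!
Mirroring `u` as `a • u` across the coupling turns every row of the interface operator on the
negative side into `a` times a row on the positive side, so the bulk rows hold on both sides.
The two interface rows are the first-row condition itself, once directly and once after
multiplication by `a`, where `a² = 1` turns `a · (a q u₁)` back into `q u₁`.
-/

open scoped ENNReal

theorem memℓp_int_of_nat {E : Type*} [NormedAddCommGroup E] {p : ℝ≥0∞} (hp : 0 < p.toReal)
    {f : ℤ → E} (hpos : Memℓp (fun n : ℕ => f (n + 1)) p)
    (hneg : Memℓp (fun n : ℕ => f (-n)) p) : Memℓp f p := by
  refine memℓp_gen (summable_int_iff_summable_nat_and_neg.mpr ⟨?_, hneg.summable hp⟩)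
  refine (summable_nat_add_iff 1).mp ?_
  simpa only [Nat.cast_add, Nat.cast_one] using hpos.summable hp

section MirrorExtend

variable {R : Type*}

/-- `u n` is the paper's `u_{n+1}`: the coupling `q` joins indices `0` and `1` of the extension,
which carry `a * u 0` and `u 0`. -/
def mirrorExtend [Mul R] (a : R) (u : ℕ → R) (i : ℤ) : R :=
  if 1 ≤ i then u (i - 1).toNat else a * u (-i).toNat

section Mul

variable [Mul R] (a : R) (u : ℕ → R)

@[simp]
theorem mirrorExtend_natCast_add_one (n : ℕ) : mirrorExtend a u (n + 1) = u n := by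
  simp [mirrorExtend]

@[simp]
theorem mirrorExtend_neg_natCast (n : ℕ) : mirrorExtend a u (-n) = a * u n := by
  simp [mirrorExtend, show ¬(1 : ℤ) ≤ -n by omega]

theorem mirrorExtend_natCast_add (n k : ℕ) : mirrorExtend a u (n + (k + 1)) = u (n + k) := by
  rw [← mirrorExtend_natCast_add_one a u (n + k)]
  push_cast
  ring_nf

theorem mirrorExtend_neg_natCast_sub (n k : ℕ) : mirrorExtend a u (-n - k) = a * u (n + k) := by
  rw [← mirrorExtend_neg_natCast a u (n + k)]
  push_cast
  ring_nf

end Mul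

variable [CommRing R] {delta beta : ℕ → R} {q lam a : R} {u : ℕ → R}

theorem mirrorExtend_bulk_pos
    (hbulk : ∀ n : ℕ,
      beta n * u n + delta (n + 1) * u (n + 1) + beta (n + 1) * u (n + 2) = lam * u (n + 1))
    (n : ℕ) :
    beta n * mirrorExtend a u (n + 1) + delta (n + 1) * mirrorExtend a u (n + 2) +
      beta (n + 1) * mirrorExtend a u (n + 3) = lam * mirrorExtend a u (n + 2) := by
  have h2 := mirrorExtend_natCast_add a u n 1
  have h3 := mirrorExtend_natCast_add a u n 2
  norm_num at h2 h3
  rw [mirrorExtend_natCast_add_one, h2, h3]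
  exact hbulk n

theorem mirrorExtend_bulk_neg
    (hbulk : ∀ n : ℕ,
      beta n * u n + delta (n + 1) * u (n + 1) + beta (n + 1) * u (n + 2) = lam * u (n + 1))
    (n : ℕ) :
    beta n * mirrorExtend a u (-n) + delta (n + 1) * mirrorExtend a u (-n - 1) +
      beta (n + 1) * mirrorExtend a u (-n - 2) = lam * mirrorExtend a u (-n - 1) := by
  have h1 := mirrorExtend_neg_natCast_sub a u n 1
  have h2 := mirrorExtend_neg_natCast_sub a u n 2
  norm_num at h1 h2
  rw [mirrorExtend_neg_natCast, h1, h2]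
  linear_combination a * hbulk n

theorem mirrorExtend_interface_pos
    (hfirst : (delta 0 - lam) * u 0 + beta 0 * u 1 = -(a * q * u 0)) :
    q * mirrorExtend a u 0 + delta 0 * mirrorExtend a u 1 + beta 0 * mirrorExtend a u 2 =
      lam * mirrorExtend a u 1 := by
  simp only [mirrorExtend]
  norm_num
  linear_combination hfirst

theorem mirrorExtend_interface_neg (ha : a * a = 1)
    (hfirst : (delta 0 - lam) * u 0 + beta 0 * u 1 = -(a * q * u 0)) :
    q * mirrorExtend a u 1 + delta 0 * mirrorExtend a u 0 + beta 0 * mirrorExtend a u (-1) =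
      lam * mirrorExtend a u 0 := by
  simp only [mirrorExtend]
  norm_num
  linear_combination a * hfirst - q * u 0 * ha

end MirrorExtend

/-- Coupled-interface construction: if `u` solves the bulk equations of `T_A` and its first row
satisfies `((T_A)₁₁ - λ)u₁ + (T_A)₁₂ u₂ = -a q u₁` with `a = ±1`, then the extension `w` of `u`
by `a·u` across the coupling `q` is an eigenvector of the interface operator at `λ`. -/
theorem stmt19 (delta beta : ℕ → ℂ) (q lam aa : ℂ) (haa : aa = 1 ∨ aa = -1)
    (u : ℕ → ℂ) (hu2 : Memℓp u 2)
    (hfirst : (delta 0 - lam) * u 0 + beta 0 * u 1 = -(aa * q * u 0))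
    (hbulk : ∀ n : ℕ,
      beta n * u n + delta (n + 1) * u (n + 1) + beta (n + 1) * u (n + 2) = lam * u (n + 1))
    (w : ℤ → ℂ)
    (hw : ∀ i : ℤ, w i = if 1 ≤ i then u (i - 1).toNat else aa * u (-i).toNat) :
    Memℓp w 2 ∧
    (q * w 0 + delta 0 * w 1 + beta 0 * w 2 = lam * w 1) ∧
    (∀ n : ℕ, beta n * w ((n : ℤ) + 1) + delta (n + 1) * w ((n : ℤ) + 2) +
      beta (n + 1) * w ((n : ℤ) + 3) = lam * w ((n : ℤ) + 2)) ∧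
    (q * w 1 + delta 0 * w 0 + beta 0 * w (-1) = lam * w 0) ∧
    (∀ n : ℕ, beta n * w (-(n : ℤ)) + delta (n + 1) * w (-(n : ℤ) - 1) +
      beta (n + 1) * w (-(n : ℤ) - 2) = lam * w (-(n : ℤ) - 1)) := by
  obtain rfl : w = mirrorExtend aa u := funext hw
  have haa_sq : aa * aa = 1 := by rcases haa with rfl | rfl <;> norm_num
  have hw2 : Memℓp (mirrorExtend aa u) 2 :=
    memℓp_int_of_nat (by norm_num) (by simpa using hu2) (by simpa using hu2.const_mul aa)
  exact ⟨hw2, mirrorExtend_interface_pos hfirst, mirrorExtend_bulk_pos hbulk,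
    mirrorExtend_interface_neg haa_sq hfirst, mirrorExtend_bulk_neg hbulk⟩
end
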